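/- arXiv:2406.10250 — 8 statements merged into one kernel-verified Lean document; each statement's English description precedes it below -/
import Mathlib

section
/- Strong LP duality for the cardinality-budget linear program: let I be a finite set, c : I → ℝ with c_i ≥ 0 for all i ∈ I, and Γ a natural number. Then the supremum of Σ_{i∈I} c_i γ_i over all γ : I → ℝ with 0 ≤ γ_i ≤ 1 for all i ∈ I and Σ_{i∈I} γ_i ≤ Γ equals the infimum of Γ·y + Σ_{i∈I} p_i over all y ∈ ℝ and p : I → ℝ with y ≥ 0, p_i ≥ 0 and y + p_i ≥ c_i for all i ∈ I, and both the supremum and infimum are attained. -/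
/-- Strong LP duality for the cardinality-budget linear program:
the primal maximum equals the dual minimum, and both are attained. -/
theorem strong_duality_cardinality_budget_LP
    {I : Type*} [Fintype I] (c : I → ℝ) (hc : ∀ i, 0 ≤ c i) (Γ : ℕ) :
    ∃ v : ℝ,
      IsGreatest {v : ℝ | ∃ γ : I → ℝ, (∀ i, 0 ≤ γ i) ∧ (∀ i, γ i ≤ 1) ∧
          (∑ i, γ i) ≤ (Γ : ℝ) ∧ v = ∑ i, c i * γ i} v ∧
      IsLeast {v : ℝ | ∃ (y : ℝ) (p : I → ℝ), 0 ≤ y ∧ (∀ i, 0 ≤ p i) ∧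
          (∀ i, c i ≤ y + p i) ∧ v = (Γ : ℝ) * y + ∑ i, p i} v := by
  classical
  -- Weak duality
  have weak : ∀ (γ : I → ℝ) (y : ℝ) (p : I → ℝ),
      (∀ i, 0 ≤ γ i) → (∀ i, γ i ≤ 1) → (∑ i, γ i) ≤ (Γ : ℝ) →
      0 ≤ y → (∀ i, 0 ≤ p i) → (∀ i, c i ≤ y + p i) →
      ∑ i, c i * γ i ≤ (Γ : ℝ) * y + ∑ i, p i := by
    intro γ y p hγ0 hγ1 hγΓ hy hp hd
    calc ∑ i, c i * γ i ≤ ∑ i, (y + p i) * γ i :=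
          Finset.sum_le_sum fun i _ => mul_le_mul_of_nonneg_right (hd i) (hγ0 i)
      _ = y * ∑ i, γ i + ∑ i, p i * γ i := by
          rw [Finset.mul_sum, ← Finset.sum_add_distrib]
          congr 1; ext i; ring
      _ ≤ y * (Γ : ℝ) + ∑ i, p i := by
          refine add_le_add (mul_le_mul_of_nonneg_left hγΓ hy)
            (Finset.sum_le_sum fun i _ => ?_)
          exact mul_le_of_le_one_right (hp i) (hγ1 i)
      _ = (Γ : ℝ) * y + ∑ i, p i := by ring
  -- It suffices to exhibit feasible primal and dual solutions with equal value
  suffices h : ∃ (γ : I → ℝ) (y : ℝ) (p : I → ℝ),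
      (∀ i, 0 ≤ γ i) ∧ (∀ i, γ i ≤ 1) ∧ (∑ i, γ i) ≤ (Γ : ℝ) ∧
      0 ≤ y ∧ (∀ i, 0 ≤ p i) ∧ (∀ i, c i ≤ y + p i) ∧
      ∑ i, c i * γ i = (Γ : ℝ) * y + ∑ i, p i by
    obtain ⟨γ, y, p, hγ0, hγ1, hγΓ, hy, hp, hd, heq⟩ := h
    refine ⟨∑ i, c i * γ i, ⟨⟨γ, hγ0, hγ1, hγΓ, rfl⟩, ?_⟩, ⟨⟨y, p, hy, hp, hd, heq⟩, ?_⟩⟩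
    · rintro v ⟨γ', hγ'0, hγ'1, hγ'Γ, rfl⟩
      rw [heq]
      exact weak γ' y p hγ'0 hγ'1 hγ'Γ hy hp hd
    · rintro v ⟨y', p', hy', hp', hd', rfl⟩
      exact weak γ y' p' hγ0 hγ1 hγΓ hy' hp' hd'
  by_cases hcard : Fintype.card I ≤ Γ
  · -- budget exceeds number of items: take everything
    refine ⟨fun _ => 1, 0, c, fun _ => zero_le_one, fun _ => le_refl 1, ?_,
      le_refl 0, hc, fun i => by simp, by simp⟩
    simp only [Finset.sum_const, Finset.card_univ, nsmul_eq_mul, mul_one]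
    exact_mod_cast hcard
  · push_neg at hcard
    -- pick a set S of size Γ maximizing the sum of c over S
    have hpow : (Finset.univ.powersetCard Γ : Finset (Finset I)).Nonempty := by
      rw [Finset.powersetCard_nonempty, Finset.card_univ]
      exact hcard.le
    obtain ⟨S, hSmem, hSmax⟩ :=
      Finset.exists_max_image _ (fun T => ∑ i ∈ T, c i) hpow
    rw [Finset.mem_powersetCard] at hSmem
    obtain ⟨-, hScard⟩ := hSmem
    have hne : (Finset.univ \ S).Nonempty := by
      rw [Finset.sdiff_nonempty]
      intro hsub
      have := Finset.card_le_card hsub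
      rw [Finset.card_univ, hScard] at this
      omega
    set y := (Finset.univ \ S).sup' hne c with hy_def
    -- every element outside S has value ≤ every element inside S
    have swap : ∀ i ∈ Finset.univ \ S, ∀ j ∈ S, c i ≤ c j := by
      intro i hi j hj
      have hiS : i ∉ S := (Finset.mem_sdiff.mp hi).2
      have hie : i ∉ S.erase j := fun h => hiS (Finset.mem_of_mem_erase h)
      have hins : insert i (S.erase j) ∈ Finset.univ.powersetCard Γ := by
        rw [Finset.mem_powersetCard]
        refine ⟨Finset.subset_univ _, ?_⟩
        rw [Finset.card_insert_of_notMem hie, Finset.card_erase_of_mem hj, hScard]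
        have : 0 < Γ := hScard ▸ Finset.card_pos.mpr ⟨j, hj⟩
        omega
      have hle := hSmax _ hins
      rw [Finset.sum_insert hie] at hle
      have herase : c j + ∑ x ∈ S.erase j, c x = ∑ x ∈ S, c x :=
        Finset.add_sum_erase S c hj
      linarith
    have hcley : ∀ i, i ∉ S → c i ≤ y :=
      fun i hi => Finset.le_sup' c (Finset.mem_sdiff.mpr ⟨Finset.mem_univ i, hi⟩)
    have hylec : ∀ j ∈ S, y ≤ c j :=
      fun j hj => Finset.sup'_le hne c fun i hi => swap i hi j hj
    have hy0 : 0 ≤ y := by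
      obtain ⟨i₀, hi₀⟩ := hne
      exact le_trans (hc i₀) (Finset.le_sup' c hi₀)
    refine ⟨fun i => if i ∈ S then 1 else 0, y,
      fun i => if i ∈ S then c i - y else 0, ?_, ?_, ?_, hy0, ?_, ?_, ?_⟩
    · intro i; by_cases hi : i ∈ S <;> simp [hi]
    · intro i; by_cases hi : i ∈ S <;> simp [hi]
    · rw [Finset.sum_ite_mem, Finset.univ_inter, Finset.sum_const, hScard]
      simp
    · intro i
      by_cases hi : i ∈ S
      · simp only [hi, if_true]
        linarith [hylec i hi]
      · simp [hi]
    · intro i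
      by_cases hi : i ∈ S
      · simp [hi]
      · simp only [hi, if_false, add_zero]
        exact hcley i hi
    · rw [Finset.sum_ite_mem, Finset.univ_inter]
      have : ∑ i, c i * (if i ∈ S then (1:ℝ) else 0) = ∑ i ∈ S, c i := by
        simp only [mul_ite, mul_one, mul_zero, Finset.sum_ite_mem, Finset.univ_inter]
      rw [this, Finset.sum_sub_distrib, Finset.sum_const, hScard, nsmul_eq_mul]
      ring
end

section
/- Explicit optimal dual solution for the cardinality-budget linear program: let I be a finite set, c : I → ℝ with c_i ≥ 0 for all i ∈ I, Γ a natural number with 1 ≤ Γ ≤ |I|, and let y* be the Γ-th largest value among (c_i)_{i∈I}. Define p_i := max(c_i − y*, 0) for each i ∈ I. Then y* ≥ 0, p_i ≥ 0 and y* + p_i ≥ c_i for all i ∈ I, and Γ·y* + Σ_{i∈I} p_i equals the sum of the Γ largest values among (c_i)_{i∈I}. -/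
/-!
Split the sorted list `l` at position `Γ`: the head `l.take Γ` holds the `Γ` largest values,
all at least `y⋆`, and the tail holds values at most `y⋆`. Hence `max (x - y⋆) 0` vanishes on
the tail and equals `x - y⋆` on the head, so `∑ p` is the head sum minus `Γ • y⋆`.
-/

namespace List

section Threshold

variable {α : Type*} [LinearOrder α] {l : List α} {k : ℕ} {d x : α}

theorem le_getD_of_forall_le (hd : ∀ z ∈ l, d ≤ z) (n : ℕ) : d ≤ l.getD n d := by
  rcases lt_or_ge n l.length with hn | hn
  · rw [getD_eq_getElem _ _ hn]
    exact hd _ (getElem_mem _)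
  · rw [getD_eq_default _ _ hn]

/- Through `k - 1 = 0` for `k = 0` and the default `d` for `k > l.length`, the threshold
`l.getD (k - 1) d` stays meaningful for every `k`. -/
theorem SortedGE.getD_pred_le_of_mem_take (hl : l.SortedGE) (hd : ∀ z ∈ l, d ≤ z)
    (hx : x ∈ l.take k) : l.getD (k - 1) d ≤ x := by
  obtain ⟨j, hj, rfl⟩ := mem_iff_getElem.mp hx
  rw [getElem_take]
  rcases lt_or_ge (k - 1) l.length with hk | hk
  · rw [getD_eq_getElem _ _ hk]
    exact hl.getElem_ge_getElem_of_le (by rw [length_take] at hj; omega)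
  · rw [getD_eq_default _ _ hk]
    exact hd _ (getElem_mem _)

theorem SortedGE.le_getD_pred_of_mem_drop (hl : l.SortedGE) (hx : x ∈ l.drop k) :
    x ≤ l.getD (k - 1) d := by
  obtain ⟨j, hj, rfl⟩ := mem_iff_getElem.mp hx
  rw [length_drop] at hj
  rw [getElem_drop, getD_eq_getElem _ _ (by omega)]
  exact hl.getElem_ge_getElem_of_le (by omega)

end Threshold

theorem sum_map_sub_add_length_nsmul {α : Type*} [AddCommGroup α] (l : List α) (y : α) :
    (l.map fun x => x - y).sum + l.length • y = l.sum := by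
  induction l with
  | nil => simp
  | cons a l ih => rw [map_cons, sum_cons, length_cons, succ_nsmul, sum_cons, ← ih]; abel

variable {α : Type*} [AddCommGroup α] [LinearOrder α] [IsOrderedAddMonoid α]

theorem sum_map_max_sub_zero_add_nsmul_of_take_drop {l : List α} {k : ℕ} {y : α}
    (htake : ∀ x ∈ l.take k, y ≤ x) (hdrop : ∀ x ∈ l.drop k, x ≤ y) :
    (l.map fun x => max (x - y) 0).sum + (l.take k).length • y = (l.take k).sum := by
  have hpos : (l.take k).map (fun x => max (x - y) 0) = (l.take k).map (· - y) :=
    map_congr_left fun x hx => max_eq_left (sub_nonneg.mpr (htake x hx))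
  have hzero : ((l.drop k).map fun x => max (x - y) 0).sum = 0 :=
    sum_eq_zero fun z hz => by
      obtain ⟨x, hx, rfl⟩ := mem_map.mp hz
      exact max_eq_right (sub_nonpos.mpr (hdrop x hx))
  rw [← sum_take_add_sum_drop _ k, ← map_take, ← map_drop, hzero, add_zero, hpos,
    sum_map_sub_add_length_nsmul]

theorem SortedGE.sum_map_max_sub_getD_pred_add_nsmul {l : List α} (hl : l.SortedGE)
    (h0 : ∀ x ∈ l, 0 ≤ x) (k : ℕ) :
    (l.map fun x => max (x - l.getD (k - 1) 0) 0).sum + k • l.getD (k - 1) 0 =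
      (l.take k).sum := by
  have hk : k • l.getD (k - 1) 0 = (l.take k).length • l.getD (k - 1) 0 := by
    rcases le_or_gt k l.length with hk | hk
    · rw [length_take, min_eq_left hk]
    · rw [getD_eq_default _ _ (by omega), smul_zero, smul_zero]
  rw [hk]
  exact sum_map_max_sub_zero_add_nsmul_of_take_drop
    (fun _ => hl.getD_pred_le_of_mem_take h0) (fun _ => hl.le_getD_pred_of_mem_drop)

end List

theorem Finset.sum_comp_eq_sum_map_of_perm {ι β M : Type*} [AddCommMonoid M] (s : Finset ι)
    (c : ι → β) (f : β → M) {l : List β} (hl : l.Perm (s.val.map c).toList) :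
    ∑ i ∈ s, f (c i) = (l.map f).sum := by
  rw [(hl.map f).sum_eq, ← Multiset.sum_coe, ← Multiset.map_coe, Multiset.coe_toList,
    Multiset.map_map]
  rfl

theorem explicit_dual_solution_cardinality_budget_LP_general
    {I : Type*} [Fintype I] (c : I → ℝ) (hc : ∀ i, 0 ≤ c i)
    (Γ : ℕ)
    (l : List ℝ) (hl : l.Pairwise (· ≥ ·))
    (hlperm : l.Perm (Finset.univ.val.map c).toList)
    (ystar : ℝ) (hystar : ystar = l.getD (Γ - 1) 0)
    (p : I → ℝ) (hp : p = fun i => max (c i - ystar) 0) :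
    0 ≤ ystar ∧ (∀ i, 0 ≤ p i) ∧ (∀ i, c i ≤ ystar + p i) ∧
      (Γ : ℝ) * ystar + ∑ i, p i = (l.take Γ).sum := by
  subst hp
  have hl_nonneg : ∀ x ∈ l, 0 ≤ x := by
    intro x hx
    obtain ⟨i, -, rfl⟩ := Multiset.mem_map.mp (Multiset.mem_toList.mp (hlperm.subset hx))
    exact hc i
  refine ⟨hystar ▸ List.le_getD_of_forall_le hl_nonneg _, fun i => le_max_right _ _,
    fun i => ?_, ?_⟩
  · linarith [le_max_left (c i - ystar) 0]
  · rw [Finset.sum_comp_eq_sum_map_of_perm Finset.univ c (fun x => max (x - ystar) 0) hlperm,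
      ← hl.sortedGE.sum_map_max_sub_getD_pred_add_nsmul hl_nonneg Γ, nsmul_eq_mul, ← hystar]
    ring

/-- Explicit optimal dual solution for the cardinality-budget linear program:
let `l` be the values of `c` sorted in nonincreasing order, let `y⋆` be the
`Γ`-th largest value of `c` (the `Γ`-th entry of `l`), and set
`p i = max (c i − y⋆) 0`.  Then `(y⋆, p)` is dual feasible and its dual
objective `Γ·y⋆ + ∑ i, p i` equals the sum of the `Γ` largest values of `c`. -/
theorem explicit_dual_solution_cardinality_budget_LP
    {I : Type*} [Fintype I] (c : I → ℝ) (hc : ∀ i, 0 ≤ c i)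
    (Γ : ℕ) (hΓ1 : 1 ≤ Γ) (hΓ2 : Γ ≤ Fintype.card I)
    (l : List ℝ) (hl : l.Pairwise (· ≥ ·))
    (hlperm : l.Perm (Finset.univ.val.map c).toList)
    (ystar : ℝ) (hystar : ystar = l.getD (Γ - 1) 0)
    (p : I → ℝ) (hp : p = fun i => max (c i - ystar) 0) :
    0 ≤ ystar ∧ (∀ i, 0 ≤ p i) ∧ (∀ i, c i ≤ ystar + p i) ∧
      (Γ : ℝ) * ystar + ∑ i, p i = (l.take Γ).sum :=
  explicit_dual_solution_cardinality_budget_LP_general c hc Γ l hl hlperm ystar hystar p hp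
end

section
/- Duality formula for the worst-case deviation term in expected ratings: let I be a finite set, x : I → {0,1}, δ : I → ℝ with δ_i ≥ 0 for all i ∈ I, and Γ a natural number. Then max over subsets S ⊆ I with |S| ≤ Γ of Σ_{i∈S} δ_i x_i equals the minimum of Γ·y + Σ_{i∈I} p_i over all y ∈ ℝ and p : I → ℝ satisfying y ≥ 0, p_i ≥ 0 and y + p_i ≥ δ_i x_i for all i ∈ I, and this minimum is attained. -/
/-!
Write `c i = δ i * x i ≥ 0`. Weak duality holds because `c i ≤ y + p i` summed over `S`
gives at most `#S * y + ∑ p ≤ Γ * y + ∑ p`. For equality, take `T` to be `min Γ |I|` indices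
with the largest `c`, and `y` a threshold separating `T` from its complement (`y = 0` if `T`
is everything). With `p i = max (c i - y) 0` the dual value is `Γ * y + ∑ i ∈ T, (c i - y)`,
which is `∑ i ∈ T, c i` because either `#T = Γ` or `y = 0`.
-/

open Finset

section

variable {I : Type*} [Fintype I]

theorem sum_le_of_dual_feasible {c : I → ℝ} {Γ : ℕ} {S : Finset I} (hS : #S ≤ Γ)
    {y : ℝ} {p : I → ℝ} (hy : 0 ≤ y) (hp : ∀ i, 0 ≤ p i) (hcp : ∀ i, c i ≤ y + p i) :
    ∑ i ∈ S, c i ≤ Γ * y + ∑ i, p i :=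
  calc ∑ i ∈ S, c i ≤ ∑ i ∈ S, (y + p i) := sum_le_sum fun i _ => hcp i
    _ = #S * y + ∑ i ∈ S, p i := by rw [sum_add_distrib, sum_const, nsmul_eq_mul]
    _ ≤ Γ * y + ∑ i, p i := by
      gcongr
      · exact fun i _ _ => hp i
      · exact subset_univ S

theorem exists_card_eq_forall_le_of_mem_of_notMem {α : Type*} [LinearOrder α] (c : I → α)
    {k : ℕ} (hk : k ≤ Fintype.card I) :
    ∃ T : Finset I, #T = k ∧ ∀ i ∈ T, ∀ j ∉ T, c j ≤ c i := by
  classical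
  induction k with
  | zero => exact ⟨∅, rfl, by simp⟩
  | succ k ih =>
    obtain ⟨T, hTcard, hT⟩ := ih (Nat.le_of_succ_le hk)
    have hne : Tᶜ.Nonempty := by
      rw [← card_pos, card_compl, hTcard]
      omega
    obtain ⟨j, hj, hjmax⟩ := Tᶜ.exists_max_image c hne
    have hjT : j ∉ T := mem_compl.1 hj
    refine ⟨insert j T, by rw [card_insert_of_notMem hjT, hTcard], ?_⟩
    intro i hi l hl
    have hlT : l ∉ T := fun h => hl (mem_insert_of_mem h)
    rcases mem_insert.1 hi with rfl | hi
    · exact hjmax l (mem_compl.2 hlT)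
    · exact hT i hi l hlT

theorem exists_top_set_and_threshold {c : I → ℝ} (hc : ∀ i, 0 ≤ c i) (Γ : ℕ) :
    ∃ (T : Finset I) (y : ℝ), #T ≤ Γ ∧ 0 ≤ y ∧ (∀ i ∈ T, y ≤ c i) ∧ (∀ j ∉ T, c j ≤ y) ∧
      (#T = Γ ∨ y = 0) := by
  classical
  obtain ⟨T, hTcard, hT⟩ :=
    exists_card_eq_forall_le_of_mem_of_notMem c (min_le_right Γ (Fintype.card I))
  have hTΓ : #T ≤ Γ := hTcard ▸ min_le_left _ _
  rcases Tᶜ.eq_empty_or_nonempty with hempty | hne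
  · have hTuniv : T = univ := (compl_eq_empty_iff T).1 hempty
    exact ⟨T, 0, hTΓ, le_rfl, fun i _ => hc i, fun j hj => absurd (hTuniv ▸ mem_univ j) hj,
      Or.inr rfl⟩
  · obtain ⟨j₀, hj₀, hmax⟩ := Tᶜ.exists_max_image c hne
    have hcard : #T = Γ := by
      have := card_pos.2 hne
      rw [card_compl] at this
      omega
    exact ⟨T, c j₀, hTΓ, hc j₀, fun i hi => hT i hi j₀ (mem_compl.1 hj₀),
      fun j hj => hmax j (mem_compl.2 hj), Or.inl hcard⟩

theorem budget_mul_add_sum_max_sub_eq {c : I → ℝ} {Γ : ℕ} {T : Finset I} {y : ℝ}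
    (hTy : ∀ i ∈ T, y ≤ c i) (hyT : ∀ j ∉ T, c j ≤ y) (hslack : #T = Γ ∨ y = 0) :
    Γ * y + ∑ i, max (c i - y) 0 = ∑ i ∈ T, c i := by
  classical
  have hsum : ∑ i, max (c i - y) 0 = ∑ i ∈ T, (c i - y) := by
    rw [← univ_inter T, ← sum_ite_mem]
    refine sum_congr rfl fun i _ => ?_
    split_ifs with hi
    · exact max_eq_left (sub_nonneg.2 (hTy i hi))
    · exact max_eq_right (sub_nonpos.2 (hyT i hi))
  rw [hsum, sum_sub_distrib, sum_const, nsmul_eq_mul]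
  rcases hslack with hcard | rfl
  · rw [hcard]; ring
  · ring

end

/-- Duality formula for the worst-case deviation term in expected ratings:
for binary `x` and nonnegative `δ`, the maximum of `∑ i ∈ S, δ i * x i` over
subsets `S` with `|S| ≤ Γ` equals the minimum of `Γ·y + ∑ i, p i` over dual
feasible `(y, p)`, and this minimum is attained. -/
theorem duality_worst_case_deviation_expectation
    {I : Type*} [Fintype I] (x : I → ℝ) (hx : ∀ i, x i = 0 ∨ x i = 1)
    (δ : I → ℝ) (hδ : ∀ i, 0 ≤ δ i) (Γ : ℕ) :
    ∃ v : ℝ,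
      IsGreatest {v : ℝ | ∃ S : Finset I, S.card ≤ Γ ∧ v = ∑ i ∈ S, δ i * x i} v ∧
      IsLeast {v : ℝ | ∃ (y : ℝ) (p : I → ℝ), 0 ≤ y ∧ (∀ i, 0 ≤ p i) ∧
          (∀ i, δ i * x i ≤ y + p i) ∧ v = (Γ : ℝ) * y + ∑ i, p i} v := by
  have hc : ∀ i, 0 ≤ δ i * x i := fun i =>
    mul_nonneg (hδ i) (by rcases hx i with h | h <;> simp [h])
  obtain ⟨T, y, hTΓ, hy, hTy, hyT, hslack⟩ := exists_top_set_and_threshold hc Γ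
  have hp : ∀ i, 0 ≤ max (δ i * x i - y) 0 := fun i => le_max_right _ _
  have hfeas : ∀ i, δ i * x i ≤ y + max (δ i * x i - y) 0 := fun i => by
    linarith [le_max_left (δ i * x i - y) 0]
  have hval := budget_mul_add_sum_max_sub_eq hTy hyT hslack
  refine ⟨∑ i ∈ T, δ i * x i, ⟨⟨T, hTΓ, rfl⟩, ?_⟩, ⟨y, _, hy, hp, hfeas, hval.symm⟩, ?_⟩
  · rintro _ ⟨S, hS, rfl⟩
    exact hval ▸ sum_le_of_dual_feasible hS hy hp hfeas
  · rintro _ ⟨y', p', hy', hp', hfeas', rfl⟩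
    exact sum_le_of_dual_feasible hTΓ hy' hp' hfeas'
end

section
/- Duality formula for the worst-case deviation term in rating covariances: let I be a finite set, x : I → {0,1}, δ : I × I → ℝ with δ_{ij} ≥ 0 for all (i,j) ∈ I × I, and Γ a natural number. Then max over subsets S ⊆ I × I with |S| ≤ Γ of Σ_{(i,j)∈S} δ_{ij} x_i x_j equals the minimum of Γ·z + Σ_{(i,j)∈I×I} q_{ij} over all z ∈ ℝ and q : I × I → ℝ satisfying z ≥ 0, q_{ij} ≥ 0 and z + q_{ij} ≥ δ_{ij} x_i x_j for all (i,j) ∈ I × I, and this minimum is attained. -/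
/-!
The minimum is the LP dual of `max ∑ f i yᵢ` over `0 ≤ y ≤ 1`, `∑ yᵢ ≤ Γ`, whose optimum is
attained at a vertex, i.e. at a subset of size at most `Γ`. Weak duality is a direct
estimate. For the reverse inequality take a subset `T` maximizing `∑ i ∈ T, f i` among those of
size at most `Γ`, set `z` to the largest value of `f` outside `T` (or `0`) and let `q` carry the
excess `f i - z` on `T`; exchange arguments against the maximality of `T` show that `(z, q)` is
dual feasible with objective `∑ i ∈ T, f i`.
-/

open Finset

section

variable {α : Type*}

section Maximizer

variable {f : α → ℝ} {Γ : ℕ} {T : Finset α}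
  (hT : ∀ S : Finset α, #S ≤ Γ → ∑ i ∈ S, f i ≤ ∑ i ∈ T, f i)
include hT

theorem le_of_notMem_of_mem_of_forall_sum_le (hTΓ : #T ≤ Γ) {i j : α} (hi : i ∉ T)
    (hj : j ∈ T) : f i ≤ f j := by
  classical
  have hi' : i ∉ T.erase j := fun h ↦ hi (mem_of_mem_erase h)
  have hT_pos : 0 < #T := card_pos.mpr ⟨j, hj⟩
  have hswap := hT (insert i (T.erase j)) (by
    rw [card_insert_of_notMem hi', card_erase_of_mem hj]; omega)
  rw [sum_insert hi', ← sum_erase_add T f hj] at hswap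
  linarith

theorem nonpos_of_notMem_of_card_lt (hTΓ : #T < Γ) {i : α} (hi : i ∉ T) : f i ≤ 0 := by
  classical
  have hadd := hT (insert i T) (by rw [card_insert_of_notMem hi]; omega)
  rw [sum_insert hi] at hadd
  linarith

end Maximizer

variable [Fintype α]

theorem sum_le_dual_objective {f q : α → ℝ} {z : ℝ} {Γ : ℕ} {S : Finset α} (hS : #S ≤ Γ)
    (hz : 0 ≤ z) (hq : ∀ i, 0 ≤ q i) (hfeas : ∀ i, f i ≤ z + q i) :
    ∑ i ∈ S, f i ≤ Γ * z + ∑ i, q i :=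
  calc ∑ i ∈ S, f i ≤ ∑ i ∈ S, (z + q i) := sum_le_sum fun i _ ↦ hfeas i
    _ = #S * z + ∑ i ∈ S, q i := by rw [sum_add_distrib, sum_const, nsmul_eq_mul]
    _ ≤ Γ * z + ∑ i, q i := by
      gcongr
      · exact fun i _ _ ↦ hq i
      · exact subset_univ S

theorem exists_card_le_forall_sum_le (f : α → ℝ) (Γ : ℕ) :
    ∃ T : Finset α, #T ≤ Γ ∧ ∀ S : Finset α, #S ≤ Γ → ∑ i ∈ S, f i ≤ ∑ i ∈ T, f i := by
  obtain ⟨T, hT, hmax⟩ := exists_max_image {S : Finset α | #S ≤ Γ} (fun S ↦ ∑ i ∈ S, f i)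
    ⟨∅, by simp⟩
  exact ⟨T, (mem_filter.mp hT).2, fun S hS ↦ hmax S (by simpa using hS)⟩

theorem exists_dual_eq_sum_of_forall_sum_le {f : α → ℝ} {Γ : ℕ} {T : Finset α}
    (hT : ∀ S : Finset α, #S ≤ Γ → ∑ i ∈ S, f i ≤ ∑ i ∈ T, f i) (hf : ∀ i, 0 ≤ f i)
    (hTΓ : #T ≤ Γ) :
    ∃ (z : ℝ) (q : α → ℝ), 0 ≤ z ∧ (∀ i, 0 ≤ q i) ∧ (∀ i, f i ≤ z + q i) ∧
      ∑ i ∈ T, f i = Γ * z + ∑ i, q i := by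
  classical
  set z := ⨆ i : {i // i ∉ T}, f i
  have hz : 0 ≤ z := Real.iSup_nonneg fun i ↦ hf i
  have hle_z {i} (hi : i ∉ T) : f i ≤ z :=
    le_ciSup (Finite.bddAbove_range fun i : {i // i ∉ T} ↦ f i) ⟨i, hi⟩
  have hz_le {j} (hj : j ∈ T) : z ≤ f j :=
    Real.iSup_le (fun i ↦ le_of_notMem_of_mem_of_forall_sum_le hT hTΓ i.2 hj) (hf j)
  -- complementary slackness: `z = 0` unless the budget `Γ` is exhausted
  have hslack : (Γ - #T : ℝ) * z = 0 := by
    rcases hTΓ.eq_or_lt with hcard | hcard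
    · simp [hcard]
    · have : z ≤ 0 := Real.iSup_le (fun i ↦ nonpos_of_notMem_of_card_lt hT hcard i.2) le_rfl
      simp [le_antisymm this hz]
  refine ⟨z, fun i ↦ if i ∈ T then f i - z else 0, hz, fun i ↦ ?_, fun i ↦ ?_, ?_⟩
  · dsimp only
    split_ifs with hi
    · linarith [hz_le hi]
    · exact le_rfl
  · dsimp only
    split_ifs with hi
    · linarith
    · simpa using hle_z hi
  · rw [Fintype.sum_ite_mem, sum_sub_distrib, sum_const, nsmul_eq_mul]
    linarith

theorem exists_isGreatest_sum_card_le_isLeast_dual (f : α → ℝ) (hf : ∀ i, 0 ≤ f i) (Γ : ℕ) :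
    ∃ v : ℝ,
      IsGreatest {v : ℝ | ∃ S : Finset α, #S ≤ Γ ∧ v = ∑ i ∈ S, f i} v ∧
      IsLeast {v : ℝ | ∃ (z : ℝ) (q : α → ℝ), 0 ≤ z ∧ (∀ i, 0 ≤ q i) ∧
          (∀ i, f i ≤ z + q i) ∧ v = Γ * z + ∑ i, q i} v := by
  obtain ⟨T, hTΓ, hT⟩ := exists_card_le_forall_sum_le f Γ
  obtain ⟨z, q, hz, hq, hfeas, hdual⟩ := exists_dual_eq_sum_of_forall_sum_le hT hf hTΓ
  refine ⟨∑ i ∈ T, f i, ⟨⟨T, hTΓ, rfl⟩, ?_⟩, ⟨⟨z, q, hz, hq, hfeas, hdual⟩, ?_⟩⟩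
  · rintro v ⟨S, hS, rfl⟩
    exact hT S hS
  · rintro w ⟨z', q', hz', hq', hfeas', rfl⟩
    exact sum_le_dual_objective hTΓ hz' hq' hfeas'

end

/-- Duality formula for the worst-case deviation term in rating covariances:
for binary `x` and nonnegative `δ` on item pairs, the maximum of
`∑ (i,j) ∈ S, δ (i,j) * x i * x j` over subsets `S ⊆ I × I` with `|S| ≤ Γ`
equals the minimum of `Γ·z + ∑ (i,j), q (i,j)` over dual feasible `(z, q)`,
and this minimum is attained. -/
theorem duality_worst_case_deviation_covariance
    {I : Type*} [Fintype I] (x : I → ℝ) (hx : ∀ i, x i = 0 ∨ x i = 1)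
    (δ : I × I → ℝ) (hδ : ∀ ij, 0 ≤ δ ij) (Γ : ℕ) :
    ∃ v : ℝ,
      IsGreatest {v : ℝ | ∃ S : Finset (I × I), S.card ≤ Γ ∧
          v = ∑ ij ∈ S, δ ij * x ij.1 * x ij.2} v ∧
      IsLeast {v : ℝ | ∃ (z : ℝ) (q : I × I → ℝ), 0 ≤ z ∧ (∀ ij, 0 ≤ q ij) ∧
          (∀ ij : I × I, δ ij * x ij.1 * x ij.2 ≤ z + q ij) ∧
          v = (Γ : ℝ) * z + ∑ ij : I × I, q ij} v := by
  have hx_nonneg (i : I) : 0 ≤ x i := by rcases hx i with h | h <;> simp [h]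
  exact exists_isGreatest_sum_card_le_isLeast_dual _
    (fun ij ↦ mul_nonneg (mul_nonneg (hδ ij) (hx_nonneg ij.1)) (hx_nonneg ij.2)) Γ
end

section
/- Worst-case expectation under the cardinality-based uncertainty set: let I be a finite set, x : I → {0,1}, μ̂ : I → ℝ, δ : I → ℝ with δ_i ≥ 0 for all i, and Γ a natural number. Then the minimum of Σ_{i∈I} μ_i x_i over all μ : I → ℝ such that there exists a subset S ⊆ I with |S| ≤ Γ, μ_i ∈ [μ̂_i − δ_i, μ̂_i + δ_i] for i ∈ S, and μ_i = μ̂_i for i ∉ S, equals Σ_{i∈I} μ̂_i x_i − max_{S ⊆ I, |S| ≤ Γ} Σ_{i∈S} δ_i x_i. -/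
/-- Worst-case expectation under the cardinality-based uncertainty set:
the minimum of `∑ i, μ i * x i` over all `μ` obtained from the estimate `μ̂`
by letting at most `Γ` entries deviate within `[μ̂ i − δ i, μ̂ i + δ i]`
equals `∑ i, μ̂ i * x i` minus the maximum of `∑ i ∈ S, δ i * x i` over
subsets `S` with `|S| ≤ Γ`. -/
theorem worst_case_expectation_cardinality_uncertainty
    {I : Type*} [Fintype I] (x : I → ℝ) (hx : ∀ i, x i = 0 ∨ x i = 1)
    (μhat δ : I → ℝ) (hδ : ∀ i, 0 ≤ δ i) (Γ : ℕ) :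
    ∃ m : ℝ,
      IsGreatest {w : ℝ | ∃ S : Finset I, S.card ≤ Γ ∧ w = ∑ i ∈ S, δ i * x i} m ∧
      IsLeast {v : ℝ | ∃ μ : I → ℝ,
          (∃ S : Finset I, S.card ≤ Γ ∧
            (∀ i ∈ S, μhat i - δ i ≤ μ i ∧ μ i ≤ μhat i + δ i) ∧
            (∀ i ∉ S, μ i = μhat i)) ∧
          v = ∑ i, μ i * x i}
        ((∑ i, μhat i * x i) - m) := by
  classical
  have hx0 : ∀ i, 0 ≤ x i := fun i => by rcases hx i with h | h <;> simp [h]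
  set T := (Finset.univ.powerset.filter (fun S : Finset I => S.card ≤ Γ)).image
      (fun S => ∑ i ∈ S, δ i * x i) with hT
  have hne : T.Nonempty := ⟨0, by simp [hT]; exact ⟨∅, by simp⟩⟩
  have hmem_T : ∀ S : Finset I, S.card ≤ Γ → (∑ i ∈ S, δ i * x i) ∈ T := by
    intro S hS
    exact Finset.mem_image.mpr ⟨S, Finset.mem_filter.mpr
      ⟨Finset.mem_powerset.mpr (Finset.subset_univ S), hS⟩, rfl⟩
  obtain ⟨S₀, hS₀, hval⟩ := Finset.mem_image.mp (T.max'_mem hne)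
  simp only [Finset.mem_filter] at hS₀
  refine ⟨T.max' hne, ⟨⟨S₀, hS₀.2, hval.symm⟩, ?_⟩, ?_, ?_⟩
  · rintro w ⟨S, hS, rfl⟩
    exact T.le_max' _ (hmem_T S hS)
  · -- membership in the left set
    refine ⟨fun i => if i ∈ S₀ then μhat i - δ i else μhat i,
      ⟨S₀, hS₀.2, ?_, ?_⟩, ?_⟩
    · intro i hi
      simp only [if_pos hi]
      constructor <;> linarith [hδ i]
    · intro i hi
      simp [hi]
    · have key : ∀ i : I, (if i ∈ S₀ then μhat i - δ i else μhat i) * x i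
          = μhat i * x i - (if i ∈ S₀ then δ i * x i else 0) := by
        intro i; split <;> ring
      rw [← hval, Finset.sum_congr rfl (fun i _ => key i), Finset.sum_sub_distrib,
        Finset.sum_ite_mem, Finset.univ_inter]
  · rintro v ⟨μ, ⟨S, hScard, hbound, heq⟩, rfl⟩
    have h1 : ∑ i ∈ S, (μhat i - μ i) * x i ≤ ∑ i ∈ S, δ i * x i :=
      Finset.sum_le_sum fun i hi =>
        mul_le_mul_of_nonneg_right (by linarith [(hbound i hi).1]) (hx0 i)
    have h2 : ∑ i ∈ S, δ i * x i ≤ T.max' hne := T.le_max' _ (hmem_T S hScard)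
    have h3 : ∑ i ∈ S, (μhat i - μ i) * x i = ∑ i, (μhat i - μ i) * x i := by
      refine Finset.sum_subset (Finset.subset_univ S) fun i _ hi => ?_
      rw [heq i hi]; ring
    have h4 : ∑ i, (μhat i - μ i) * x i = (∑ i, μhat i * x i) - ∑ i, μ i * x i := by
      rw [← Finset.sum_sub_distrib]
      exact Finset.sum_congr rfl fun i _ => by ring
    linarith
end

section
/- Worst-case variance under the cardinality-based uncertainty set: let I be a finite set, x : I → {0,1}, σ̂ : I × I → ℝ, δ : I × I → ℝ with δ_{ij} ≥ 0 for all (i,j), and Γ a natural number. Then the maximum of Σ_{(i,j)∈I×I} σ_{ij} x_i x_j over all σ : I × I → ℝ such that there exists a subset S ⊆ I × I with |S| ≤ Γ, σ_{ij} ∈ [σ̂_{ij} − δ_{ij}, σ̂_{ij} + δ_{ij}] for (i,j) ∈ S, and σ_{ij} = σ̂_{ij} for (i,j) ∉ S, equals Σ_{(i,j)∈I×I} σ̂_{ij} x_i x_j + max_{S ⊆ I×I, |S| ≤ Γ} Σ_{(i,j)∈S} δ_{ij} x_i x_j. -/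
/-- Worst-case variance under the cardinality-based uncertainty set:
the maximum of `∑ (i,j), σ (i,j) * x i * x j` over all `σ` obtained from the
estimate `σ̂` by letting at most `Γ` entries deviate within
`[σ̂ ij − δ ij, σ̂ ij + δ ij]` equals `∑ (i,j), σ̂ (i,j) * x i * x j` plus the
maximum of `∑ (i,j) ∈ S, δ (i,j) * x i * x j` over subsets `S ⊆ I × I` with
`|S| ≤ Γ`. -/
theorem worst_case_variance_cardinality_uncertainty
    {I : Type*} [Fintype I] (x : I → ℝ) (hx : ∀ i, x i = 0 ∨ x i = 1)
    (σhat δ : I × I → ℝ) (hδ : ∀ ij, 0 ≤ δ ij) (Γ : ℕ) :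
    ∃ m : ℝ,
      IsGreatest {w : ℝ | ∃ S : Finset (I × I), S.card ≤ Γ ∧
          w = ∑ ij ∈ S, δ ij * x ij.1 * x ij.2} m ∧
      IsGreatest {v : ℝ | ∃ σ : I × I → ℝ,
          (∃ S : Finset (I × I), S.card ≤ Γ ∧
            (∀ ij ∈ S, σhat ij - δ ij ≤ σ ij ∧ σ ij ≤ σhat ij + δ ij) ∧
            (∀ ij ∉ S, σ ij = σhat ij)) ∧
          v = ∑ ij : I × I, σ ij * x ij.1 * x ij.2}
        ((∑ ij : I × I, σhat ij * x ij.1 * x ij.2) + m) := by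
  classical
  set f : Finset (I × I) → ℝ := fun S => ∑ ij ∈ S, δ ij * x ij.1 * x ij.2 with hf
  have hxx : ∀ ij : I × I, 0 ≤ x ij.1 * x ij.2 := by
    intro ij
    rcases hx ij.1 with h1 | h1 <;> rcases hx ij.2 with h2 | h2 <;> simp [h1, h2]
  obtain ⟨S₀, hS₀mem, hS₀max⟩ :=
    (Finset.univ.filter (fun S : Finset (I × I) => S.card ≤ Γ)).exists_max_image f
      ⟨∅, by simp⟩
  have hS₀card : S₀.card ≤ Γ := by simpa using hS₀mem
  have hmax : ∀ S : Finset (I × I), S.card ≤ Γ → f S ≤ f S₀ := by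
    intro S hS
    exact hS₀max S (by simpa using hS)
  refine ⟨f S₀, ⟨⟨S₀, hS₀card, rfl⟩, ?_⟩, ⟨?_, ?_⟩⟩
  · rintro w ⟨S, hS, rfl⟩
    exact hmax S hS
  · -- membership: choose σ = σ̂ + δ on S₀
    refine ⟨fun ij => if ij ∈ S₀ then σhat ij + δ ij else σhat ij,
      ⟨S₀, hS₀card, ?_, ?_⟩, ?_⟩
    · intro ij hij
      simp only [hij, if_pos]
      constructor
      · linarith [hδ ij]
      · exact le_refl _
    · intro ij hij
      simp [hij]
    · symm
      have : ∀ ij : I × I,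
          (if ij ∈ S₀ then σhat ij + δ ij else σhat ij) * x ij.1 * x ij.2
            = σhat ij * x ij.1 * x ij.2
              + (if ij ∈ S₀ then δ ij * x ij.1 * x ij.2 else 0) := by
        intro ij
        by_cases h : ij ∈ S₀ <;> simp [h] <;> ring
      rw [Finset.sum_congr rfl (fun ij _ => this ij), Finset.sum_add_distrib]
      congr 1
      rw [Finset.sum_ite_mem]
      simp [hf]
  · rintro v ⟨σ, ⟨S, hScard, hbnd, hout⟩, rfl⟩
    have step : ∀ ij : I × I,
        σ ij * x ij.1 * x ij.2
          ≤ σhat ij * x ij.1 * x ij.2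
            + (if ij ∈ S then δ ij * x ij.1 * x ij.2 else 0) := by
      intro ij
      by_cases h : ij ∈ S
      · have hub := (hbnd ij h).2
        have := mul_le_mul_of_nonneg_right hub (hxx ij)
        simp only [h, if_pos]
        calc σ ij * x ij.1 * x ij.2 = σ ij * (x ij.1 * x ij.2) := by ring
          _ ≤ (σhat ij + δ ij) * (x ij.1 * x ij.2) := this
          _ = σhat ij * x ij.1 * x ij.2 + δ ij * x ij.1 * x ij.2 := by ring
      · simp [h, hout ij h]
    calc ∑ ij : I × I, σ ij * x ij.1 * x ij.2
        ≤ ∑ ij : I × I, (σhat ij * x ij.1 * x ij.2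
            + (if ij ∈ S then δ ij * x ij.1 * x ij.2 else 0)) :=
          Finset.sum_le_sum (fun ij _ => step ij)
      _ = (∑ ij : I × I, σhat ij * x ij.1 * x ij.2) + f S := by
          rw [Finset.sum_add_distrib, Finset.sum_ite_mem]
          simp [hf]
      _ ≤ (∑ ij : I × I, σhat ij * x ij.1 * x ij.2) + f S₀ := by
          linarith [hmax S hScard]
end

section
/- Pointwise version of Theorem 1 (equality of worst-case and dualized objectives): let I be a finite set, α ∈ [0,1], μ̂ : I → ℝ, σ̂ : I × I → ℝ, δ^μ : I → ℝ and δ^σ : I × I → ℝ nonnegative, and Γ^μ, Γ^σ natural numbers. For every x : I → {0,1}, the worst-case objective α(Σ_{i,j} σ̂_{ij} x_i x_j + max_{S^σ ⊆ I×I, |S^σ| ≤ Γ^σ} Σ_{(i,j)∈S^σ} δ^σ_{ij} x_i x_j) − (1−α)(Σ_i μ̂_i x_i − max_{S^μ ⊆ I, |S^μ| ≤ Γ^μ} Σ_{i∈S^μ} δ^μ_i x_i) equals the minimum over all y, z ∈ ℝ, p : I → ℝ, q : I × I → ℝ satisfying y ≥ 0, z ≥ 0, p_i ≥ 0, δ^μ_i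 x_i ≤ y + p_i for all i ∈ I, q_{ij} ≥ 0, and δ^σ_{ij} x_i x_j ≤ z + q_{ij} for all (i,j) ∈ I × I, of α(Σ_{i,j} σ̂_{ij} x_i x_j + z·Γ^σ + Σ_{i,j} q_{ij}) − (1−α)(Σ_i μ̂_i x_i − y·Γ^μ − Σ_i p_i), and this minimum is attained. -/
open Finset

/-- There is a set of `k` largest elements. -/
lemma robust_exists_top_set {J : Type*} [DecidableEq J] (f : J → ℝ) :
    ∀ (k : ℕ) (s : Finset J), k ≤ s.card →
      ∃ T : Finset J, T ⊆ s ∧ T.card = k ∧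
        ∀ i ∈ T, ∀ j ∈ s, j ∉ T → f j ≤ f i := by
  intro k
  induction k with
  | zero => intro s _; exact ⟨∅, empty_subset s, rfl, by simp⟩
  | succ k ih =>
    intro s hk
    have hs : s.Nonempty := card_pos.mp (lt_of_lt_of_le (Nat.succ_pos k) hk)
    obtain ⟨a, ha, hmax⟩ := s.exists_max_image f hs
    have hk' : k ≤ (s.erase a).card := by
      rw [card_erase_of_mem ha]; omega
    obtain ⟨T', hT's, hT'card, hT'prop⟩ := ih (s.erase a) hk'
    have haT' : a ∉ T' := fun h => (mem_erase.mp (hT's h)).1 rfl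
    refine ⟨insert a T', ?_, ?_, ?_⟩
    · exact insert_subset ha (hT's.trans (erase_subset a s))
    · rw [card_insert_of_notMem haT', hT'card]
    · intro i hi j hj hjT
      rcases mem_insert.mp hi with rfl | hi'
      · exact hmax j hj
      · refine hT'prop i hi' j (mem_erase.mpr ⟨?_, hj⟩) ?_
        · intro h; exact hjT (h ▸ mem_insert_self a T')
        · intro h; exact hjT (mem_insert_of_mem h)

/-- Weak duality. -/
lemma robust_weak {J : Type*} [Fintype J] (f : J → ℝ) (Γ : ℕ) (y : ℝ) (p : J → ℝ)
    (hy : 0 ≤ y) (hp : ∀ i, 0 ≤ p i) (hfp : ∀ i, f i ≤ y + p i)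
    (S : Finset J) (hS : S.card ≤ Γ) :
    ∑ i ∈ S, f i ≤ y * Γ + ∑ i, p i := by
  calc ∑ i ∈ S, f i ≤ ∑ i ∈ S, (y + p i) := Finset.sum_le_sum fun i _ => hfp i
    _ = y * S.card + ∑ i ∈ S, p i := by
        rw [Finset.sum_add_distrib, Finset.sum_const, nsmul_eq_mul, mul_comm]
    _ ≤ y * Γ + ∑ i, p i := by
        exact add_le_add
          (mul_le_mul_of_nonneg_left (by exact_mod_cast hS) hy)
          (Finset.sum_le_sum_of_subset_of_nonneg (Finset.subset_univ S)
            fun i _ _ => hp i)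

/-- Strong duality: a dual feasible point attaining some primal value. -/
lemma robust_key {J : Type*} [Fintype J] [DecidableEq J] (f : J → ℝ)
    (hf : ∀ i, 0 ≤ f i) (Γ : ℕ) :
    ∃ (y : ℝ) (p : J → ℝ) (S : Finset J),
      0 ≤ y ∧ (∀ i, 0 ≤ p i) ∧ (∀ i, f i ≤ y + p i) ∧
      S.card ≤ Γ ∧ ∑ i ∈ S, f i = y * Γ + ∑ i, p i := by
  rcases Nat.eq_zero_or_pos Γ with hΓ0 | hΓpos
  · subst hΓ0
    refine ⟨∑ i, f i, fun _ => 0, ∅, Finset.sum_nonneg fun i _ => hf i,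
      fun _ => le_refl 0, fun i => ?_, le_refl 0, by simp⟩
    simpa using Finset.single_le_sum (fun j (_ : j ∈ Finset.univ) => hf j)
      (Finset.mem_univ i)
  rcases le_or_gt (Fintype.card J) Γ with hcard | hcard
  · refine ⟨0, f, Finset.univ, le_refl 0, hf, fun i => by simp, by simpa using hcard, by simp⟩
  · -- 0 < Γ < card J
    obtain ⟨T, -, hTcard, hTtop⟩ := robust_exists_top_set f Γ Finset.univ
      (by simpa using hcard.le)
    have hTne : T.Nonempty := Finset.card_pos.mp (by omega)
    obtain ⟨t, htT, htmin⟩ := T.exists_min_image f hTne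
    set y := f t with hy
    refine ⟨y, fun i => max (f i - y) 0, T, hf t, fun i => le_max_right _ _,
      fun i => ?_, le_of_eq hTcard, ?_⟩
    · have : f i - y ≤ max (f i - y) 0 := le_max_left _ _
      linarith
    · have hout : ∀ i ∈ Finset.univ, i ∉ T → max (f i - y) 0 = 0 := by
        intro i _ hiT
        have := hTtop t htT i (Finset.mem_univ i) hiT
        simp only [hy] at *
        exact max_eq_right (by linarith)
      have hsum : ∑ i, max (f i - y) 0 = ∑ i ∈ T, max (f i - y) 0 :=
        (Finset.sum_subset (Finset.subset_univ T) hout).symm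
      have hin : ∑ i ∈ T, max (f i - y) 0 = ∑ i ∈ T, (f i - y) :=
        Finset.sum_congr rfl fun i hi => max_eq_left (by linarith [htmin i hi])
      rw [hsum, hin, Finset.sum_sub_distrib, Finset.sum_const, hTcard, nsmul_eq_mul]
      ring


/-- Pointwise version of Theorem 1: for each fixed binary `x`, the worst-case
objective
`α (∑ σ̂ᵢⱼ xᵢ xⱼ + max_{|Sσ| ≤ Γσ} ∑ δσᵢⱼ xᵢ xⱼ) − (1−α)(∑ μ̂ᵢ xᵢ − max_{|Sμ| ≤ Γμ} ∑ δμᵢ xᵢ)`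
equals the minimum of the dualized objective
`α (∑ σ̂ᵢⱼ xᵢ xⱼ + z Γσ + ∑ qᵢⱼ) − (1−α)(∑ μ̂ᵢ xᵢ − y Γμ − ∑ pᵢ)`
over dual feasible `(y, z, p, q)`, and this minimum is attained. -/
theorem pointwise_robust_dualization
    {I : Type*} [Fintype I] (α : ℝ) (hα0 : 0 ≤ α) (hα1 : α ≤ 1)
    (μhat : I → ℝ) (σhat : I × I → ℝ)
    (δμ : I → ℝ) (δσ : I × I → ℝ)
    (hδμ : ∀ i, 0 ≤ δμ i) (hδσ : ∀ ij, 0 ≤ δσ ij)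
    (Γμ Γσ : ℕ)
    (x : I → ℝ) (hx : ∀ i, x i = 0 ∨ x i = 1) :
    ∃ mμ mσ : ℝ,
      IsGreatest {w : ℝ | ∃ S : Finset I, S.card ≤ Γμ ∧ w = ∑ i ∈ S, δμ i * x i} mμ ∧
      IsGreatest {w : ℝ | ∃ S : Finset (I × I), S.card ≤ Γσ ∧
          w = ∑ ij ∈ S, δσ ij * x ij.1 * x ij.2} mσ ∧
      IsLeast {v : ℝ | ∃ (y z : ℝ) (p : I → ℝ) (q : I × I → ℝ),
          0 ≤ y ∧ 0 ≤ z ∧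
          (∀ i, 0 ≤ p i) ∧ (∀ i, δμ i * x i ≤ y + p i) ∧
          (∀ ij, 0 ≤ q ij) ∧ (∀ ij : I × I, δσ ij * x ij.1 * x ij.2 ≤ z + q ij) ∧
          v = α * ((∑ ij : I × I, σhat ij * x ij.1 * x ij.2) + z * (Γσ : ℝ)
                    + ∑ ij : I × I, q ij)
              - (1 - α) * ((∑ i, μhat i * x i) - y * (Γμ : ℝ) - ∑ i, p i)}
        (α * ((∑ ij : I × I, σhat ij * x ij.1 * x ij.2) + mσ)
          - (1 - α) * ((∑ i, μhat i * x i) - mμ)) := by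
  classical
  have hxnn : ∀ i, 0 ≤ x i := fun i => by rcases hx i with h | h <;> simp [h]
  set fμ : I → ℝ := fun i => δμ i * x i with hfμ
  set fσ : I × I → ℝ := fun ij => δσ ij * x ij.1 * x ij.2 with hfσ
  have hfμ0 : ∀ i, 0 ≤ fμ i := fun i => mul_nonneg (hδμ i) (hxnn i)
  have hfσ0 : ∀ ij, 0 ≤ fσ ij := fun ij =>
    mul_nonneg (mul_nonneg (hδσ ij) (hxnn ij.1)) (hxnn ij.2)
  obtain ⟨y, p, Sμ, hy, hp, hfp, hSμ, heqμ⟩ := robust_key fμ hfμ0 Γμ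
  obtain ⟨z, q, Sσ, hz, hq, hfq, hSσ, heqσ⟩ := robust_key fσ hfσ0 Γσ
  refine ⟨∑ i ∈ Sμ, fμ i, ∑ ij ∈ Sσ, fσ ij, ⟨⟨Sμ, hSμ, rfl⟩, ?_⟩, ⟨⟨Sσ, hSσ, rfl⟩, ?_⟩, ?_, ?_⟩
  · rintro w ⟨S, hS, rfl⟩
    rw [heqμ]
    exact robust_weak fμ Γμ y p hy hp hfp S hS
  · rintro w ⟨S, hS, rfl⟩
    rw [heqσ]
    exact robust_weak fσ Γσ z q hz hq hfq S hS
  · exact ⟨y, z, p, q, hy, hz, hp, hfp, hq, hfq, by rw [heqμ, heqσ]; ring⟩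
  · rintro v ⟨y', z', p', q', hy', hz', hp', hfp', hq', hfq', rfl⟩
    have h1 : ∑ i ∈ Sμ, fμ i ≤ y' * (Γμ : ℝ) + ∑ i, p' i :=
      robust_weak fμ Γμ y' p' hy' hp' hfp' Sμ hSμ
    have h2 : ∑ ij ∈ Sσ, fσ ij ≤ z' * (Γσ : ℝ) + ∑ ij, q' ij :=
      robust_weak fσ Γσ z' q' hz' hq' hfq' Sσ hSσ
    have h3 := mul_le_mul_of_nonneg_left h1 (by linarith : (0:ℝ) ≤ 1 - α)
    have h4 := mul_le_mul_of_nonneg_left h2 hα0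
    nlinarith [h3, h4]
end

section
/- Theorem 1 (equivalence of the robust and dualized optimization problems): let I be a finite set, α ∈ [0,1], μ̂ : I → ℝ, σ̂ : I × I → ℝ, δ^μ : I → ℝ and δ^σ : I × I → ℝ nonnegative, Γ^μ, Γ^σ natural numbers, and N a natural number with N ≤ |I|. Then the minimum over x : I → {0,1} with Σ_{i∈I} x_i = N of the worst-case objective α(Σ_{i,j} σ̂_{ij} x_i x_j + max_{|S^σ| ≤ Γ^σ} Σ_{(i,j)∈S^σ} δ^σ_{ij} x_i x_j) − (1−α)(Σ_i μ̂_i x_i − max_{|S^μ| ≤ Γ^μ} Σ_{i∈S^μ} δ^μ_i x_i) equals the minimum over all (x, p, q, y, z) with x : I → {0,1}, Σ_{i∈I} x_i = N, y ≥ 0, z ≥ 0, p_i ≥ 0 and δ^μ_i x_i ≤ y + p_i for all i ∈ I, q_{ij} ≥ 0 and δ^σ_{ij} x_i x_j ≤ z + q_{ij} for all (i,j) ∈ I × I, of α(Σ_{i,j} σ̂_{ij} x_i x_j + z·Γ^σ + Σ_{i,j} q_{ij}) − (1−α)(Σ_i μ̂_i x_i − y·Γ^μ − Σ_i p_i). Moreover,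 x attains the first minimum if and only if there exist (p, q, y, z) such that (x, p, q, y, z) attains the second minimum. -/
/-!
For a fixed selection `x`, each worst-case term has the form `max_{|S| ≤ Γ} ∑_{i ∈ S} aᵢ`, and
it equals the least value of `y Γ + ∑ pᵢ` over `y, p ≥ 0` with `aᵢ ≤ y + pᵢ`. Weak duality is a
termwise bound. For equality take a maximizing `S`: it cannot be improved by dropping, adding or
exchanging one index, so the threshold `y = max (0, max_{i ∉ S} aᵢ)` lies below every `aⱼ` with
`j ∈ S` and vanishes when `|S| < Γ`; then `pᵢ = aᵢ - y` on `S` and `0` elsewhere is a dual solution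
of value `∑_{i ∈ S} aᵢ`. Since `α, 1 - α ≥ 0`, the robust objective at `x` is therefore the
minimum of the dualized objective over `(p, q, y, z)`, and minimizing over the finitely many
feasible `x` commutes with this inner minimization.
-/

open Finset

section BudgetedUncertainty

variable {J : Type*} {a : J → ℝ} {Γ : ℕ}

def budgetSums (a : J → ℝ) (Γ : ℕ) : Set ℝ :=
  {w | ∃ S : Finset J, S.card ≤ Γ ∧ w = ∑ i ∈ S, a i}

def budgetDualValues [Fintype J] (a : J → ℝ) (Γ : ℕ) : Set ℝ :=
  {v | ∃ (y : ℝ) (p : J → ℝ), 0 ≤ y ∧ (∀ i, 0 ≤ p i) ∧ (∀ i, a i ≤ y + p i) ∧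
    v = y * Γ + ∑ i, p i}

theorem sum_le_of_mem_budgetDualValues [Fintype J] {S : Finset J} (hS : S.card ≤ Γ) {v : ℝ}
    (hv : v ∈ budgetDualValues a Γ) : ∑ i ∈ S, a i ≤ v := by
  obtain ⟨y, p, hy, hp, hap, rfl⟩ := hv
  calc ∑ i ∈ S, a i ≤ ∑ i ∈ S, (y + p i) := sum_le_sum fun i _ => hap i
    _ = S.card * y + ∑ i ∈ S, p i := by rw [sum_add_distrib, sum_const, nsmul_eq_mul]
    _ ≤ Γ * y + ∑ i, p i := by
      gcongr ?_ * y + ?_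
      · exact_mod_cast hS
      · exact sum_le_sum_of_subset_of_nonneg (subset_univ S) fun i _ _ => hp i
    _ = y * Γ + ∑ i, p i := by ring

section Maximizer

variable [DecidableEq J] {S : Finset J}

theorem nonneg_of_mem_of_isMaxBudgetSum (hSΓ : S.card ≤ Γ)
    (hS : ∑ i ∈ S, a i ∈ upperBounds (budgetSums a Γ)) {j : J} (hj : j ∈ S) : 0 ≤ a j := by
  have := hS ⟨S.erase j, (card_erase_le).trans hSΓ, rfl⟩
  linarith [sum_erase_add S a hj]

theorem le_of_notMem_of_mem_of_isMaxBudgetSum (hSΓ : S.card ≤ Γ)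
    (hS : ∑ i ∈ S, a i ∈ upperBounds (budgetSums a Γ)) {i j : J} (hi : i ∉ S) (hj : j ∈ S) :
    a i ≤ a j := by
  have hi' : i ∉ S.erase j := fun h => hi (mem_of_mem_erase h)
  have hcard : (insert i (S.erase j)).card ≤ Γ := by
    rw [card_insert_of_notMem hi', card_erase_of_mem hj]
    have := card_pos.2 ⟨j, hj⟩
    omega
  have := hS ⟨_, hcard, rfl⟩
  rw [sum_insert hi'] at this
  linarith [sum_erase_add S a hj]

theorem nonpos_of_notMem_of_card_lt_of_isMaxBudgetSum
    (hS : ∑ i ∈ S, a i ∈ upperBounds (budgetSums a Γ)) (hlt : S.card < Γ) {i : J} (hi : i ∉ S) :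
    a i ≤ 0 := by
  have := hS ⟨insert i S, (card_insert_of_notMem hi).trans_le hlt, rfl⟩
  rw [sum_insert hi] at this
  linarith

end Maximizer

theorem exists_threshold_of_isMaxBudgetSum [Fintype J] [DecidableEq J] {S : Finset J}
    (hSΓ : S.card ≤ Γ) (hS : ∑ i ∈ S, a i ∈ upperBounds (budgetSums a Γ)) :
    ∃ y, 0 ≤ y ∧ (∀ i ∉ S, a i ≤ y) ∧ (∀ j ∈ S, y ≤ a j) ∧ (S.card < Γ → y = 0) := by
  set y := (insert 0 ((Sᶜ).image a)).max' (insert_nonempty _ _)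
  have hy0 : 0 ≤ y := le_max' _ _ (mem_insert_self _ _)
  refine ⟨y, hy0, fun i hi => le_max' _ _ (mem_insert_of_mem (mem_image_of_mem a
    (mem_compl.2 hi))), fun j hj => max'_le _ _ _ ?_, fun hlt => le_antisymm (max'_le _ _ _ ?_) hy0⟩
  · simp only [mem_insert, mem_image, mem_compl]
    rintro _ (rfl | ⟨i, hi, rfl⟩)
    · exact nonneg_of_mem_of_isMaxBudgetSum hSΓ hS hj
    · exact le_of_notMem_of_mem_of_isMaxBudgetSum hSΓ hS hi hj
  · simp only [mem_insert, mem_image, mem_compl]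
    rintro _ (rfl | ⟨i, hi, rfl⟩)
    · exact le_rfl
    · exact nonpos_of_notMem_of_card_lt_of_isMaxBudgetSum hS hlt hi

theorem IsGreatest.isLeast_budgetDualValues [Fintype J] {g : ℝ}
    (hg : IsGreatest (budgetSums a Γ) g) : IsLeast (budgetDualValues a Γ) g := by
  classical
  obtain ⟨S, hSΓ, rfl⟩ := hg.1
  refine ⟨?_, fun v hv => sum_le_of_mem_budgetDualValues hSΓ hv⟩
  obtain ⟨y, hy0, hyout, hyin, hyslack⟩ := exists_threshold_of_isMaxBudgetSum hSΓ hg.2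
  refine ⟨y, fun i => if i ∈ S then a i - y else 0, hy0, fun i => ?_, fun i => ?_, ?_⟩ <;>
    dsimp only
  · split_ifs with hi
    · linarith [hyin i hi]
    · exact le_rfl
  · split_ifs with hi
    · linarith
    · linarith [hyout i hi]
  · have hslack : y * (Γ - S.card) = 0 := by
      rcases hSΓ.lt_or_eq with hlt | heq
      · rw [hyslack hlt, zero_mul]
      · rw [heq, sub_self, mul_zero]
    rw [sum_ite_mem, univ_inter, sum_sub_distrib, sum_const, nsmul_eq_mul]
    linarith

end BudgetedUncertainty

theorem isLeast_dualized_objective {J K : Type*} [Fintype J] [Fintype K] {α : ℝ}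
    (hα0 : 0 ≤ α) (hα1 : α ≤ 1) (A B : ℝ) {a : J → ℝ} {b : K → ℝ} {Γa Γb : ℕ} {ga gb : ℝ}
    (hga : IsGreatest (budgetSums a Γa) ga) (hgb : IsGreatest (budgetSums b Γb) gb) :
    IsLeast {v | ∃ (p : J → ℝ) (q : K → ℝ) (y z : ℝ), 0 ≤ y ∧ 0 ≤ z ∧
        (∀ i, 0 ≤ p i) ∧ (∀ i, a i ≤ y + p i) ∧ (∀ k, 0 ≤ q k) ∧ (∀ k, b k ≤ z + q k) ∧
        v = α * (A + z * Γb + ∑ k, q k) - (1 - α) * (B - y * Γa - ∑ i, p i)}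
      (α * (A + gb) - (1 - α) * (B - ga)) := by
  obtain ⟨⟨y, p, hy, hp, hap, hga_eq⟩, hga_le⟩ := hga.isLeast_budgetDualValues
  obtain ⟨⟨z, q, hz, hq, hbq, hgb_eq⟩, hgb_le⟩ := hgb.isLeast_budgetDualValues
  refine ⟨⟨p, q, y, z, hy, hz, hp, hap, hq, hbq, by rw [hga_eq, hgb_eq]; ring⟩, ?_⟩
  rintro _ ⟨p, q, y, z, hy, hz, hp, hap, hq, hbq, rfl⟩
  have hga_dual : ga ≤ y * Γa + ∑ i, p i := hga_le ⟨y, p, hy, hp, hap, rfl⟩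
  have hgb_dual : gb ≤ z * Γb + ∑ k, q k := hgb_le ⟨z, q, hz, hq, hbq, rfl⟩
  linarith [mul_le_mul_of_nonneg_left hgb_dual hα0,
    mul_le_mul_of_nonneg_left hga_dual (sub_nonneg.2 hα1)]

section BinarySelections

variable (I : Type*) [Fintype I] (N : ℕ)

def binarySelections : Set (I → ℝ) :=
  {x | (∀ i, x i = 0 ∨ x i = 1) ∧ ∑ i, x i = N}

theorem binarySelections_finite : (binarySelections I N).Finite :=
  (Set.Finite.pi (t := fun _ : I => ({0, 1} : Set ℝ)) fun _ => by simp).subset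
    fun x hx i _ => hx.1 i

variable {I N}

theorem binarySelections_nonempty (hN : N ≤ Fintype.card I) :
    (binarySelections I N).Nonempty := by
  classical
  obtain ⟨S, -, hS⟩ := exists_subset_card_eq (s := (univ : Finset I)) (by simpa using hN)
  exact ⟨fun i => if i ∈ S then 1 else 0, fun i => by dsimp only; split_ifs <;> simp,
    by simp [hS]⟩

end BinarySelections

theorem robust_portfolio_dualization_equiv_general
    {I : Type*} [Fintype I] (α : ℝ) (hα0 : 0 ≤ α) (hα1 : α ≤ 1)
    (μhat : I → ℝ) (σhat : I × I → ℝ)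
    (δμ : I → ℝ) (δσ : I × I → ℝ)
    (Γμ Γσ N : ℕ) (hN : N ≤ Fintype.card I)
    (gμ gσ : (I → ℝ) → ℝ)
    (hgμ : ∀ x : I → ℝ,
      IsGreatest {w : ℝ | ∃ S : Finset I, S.card ≤ Γμ ∧ w = ∑ i ∈ S, δμ i * x i} (gμ x))
    (hgσ : ∀ x : I → ℝ,
      IsGreatest {w : ℝ | ∃ S : Finset (I × I), S.card ≤ Γσ ∧
          w = ∑ ij ∈ S, δσ ij * x ij.1 * x ij.2} (gσ x)) :
    ∃ v : ℝ,
      IsLeast {v : ℝ | ∃ x : I → ℝ, (∀ i, x i = 0 ∨ x i = 1) ∧ (∑ i, x i) = (N : ℝ) ∧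
          v = α * ((∑ ij : I × I, σhat ij * x ij.1 * x ij.2) + gσ x)
              - (1 - α) * ((∑ i, μhat i * x i) - gμ x)} v ∧
      IsLeast {v : ℝ | ∃ (x : I → ℝ) (p : I → ℝ) (q : I × I → ℝ) (y z : ℝ),
          (∀ i, x i = 0 ∨ x i = 1) ∧ (∑ i, x i) = (N : ℝ) ∧
          0 ≤ y ∧ 0 ≤ z ∧
          (∀ i, 0 ≤ p i) ∧ (∀ i, δμ i * x i ≤ y + p i) ∧
          (∀ ij, 0 ≤ q ij) ∧ (∀ ij : I × I, δσ ij * x ij.1 * x ij.2 ≤ z + q ij) ∧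
          v = α * ((∑ ij : I × I, σhat ij * x ij.1 * x ij.2) + z * (Γσ : ℝ)
                    + ∑ ij : I × I, q ij)
              - (1 - α) * ((∑ i, μhat i * x i) - y * (Γμ : ℝ) - ∑ i, p i)} v ∧
      (∀ x : I → ℝ, (∀ i, x i = 0 ∨ x i = 1) → (∑ i, x i) = (N : ℝ) →
        ((α * ((∑ ij : I × I, σhat ij * x ij.1 * x ij.2) + gσ x)
            - (1 - α) * ((∑ i, μhat i * x i) - gμ x) = v) ↔
          (∃ (p : I → ℝ) (q : I × I → ℝ) (y z : ℝ),
            0 ≤ y ∧ 0 ≤ z ∧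
            (∀ i, 0 ≤ p i) ∧ (∀ i, δμ i * x i ≤ y + p i) ∧
            (∀ ij, 0 ≤ q ij) ∧ (∀ ij : I × I, δσ ij * x ij.1 * x ij.2 ≤ z + q ij) ∧
            α * ((∑ ij : I × I, σhat ij * x ij.1 * x ij.2) + z * (Γσ : ℝ)
                  + ∑ ij : I × I, q ij)
              - (1 - α) * ((∑ i, μhat i * x i) - y * (Γμ : ℝ) - ∑ i, p i) = v))) := by
  let f : (I → ℝ) → ℝ := fun x => α * ((∑ ij : I × I, σhat ij * x ij.1 * x ij.2) + gσ x)
    - (1 - α) * ((∑ i, μhat i * x i) - gμ x)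
  have hdual x := isLeast_dualized_objective hα0 hα1 (∑ ij : I × I, σhat ij * x ij.1 * x ij.2)
    (∑ i, μhat i * x i) (hgμ x) (hgσ x)
  obtain ⟨x₀, hx₀, hmin⟩ := Set.exists_min_image _ f (binarySelections_finite I N)
    (binarySelections_nonempty hN)
  refine ⟨f x₀, ⟨⟨x₀, hx₀.1, hx₀.2, rfl⟩, ?_⟩, ⟨?_, ?_⟩, fun x hx hsum => ⟨fun hfx => ?_, ?_⟩⟩
  · rintro _ ⟨x, hx, hsum, rfl⟩
    exact hmin x ⟨hx, hsum⟩
  · obtain ⟨p, q, y, z, hy, hz, hp, hpx, hq, hqx, hD⟩ := (hdual x₀).1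
    exact ⟨x₀, p, q, y, z, hx₀.1, hx₀.2, hy, hz, hp, hpx, hq, hqx, hD⟩
  · rintro _ ⟨x, p, q, y, z, hx, hsum, hy, hz, hp, hpx, hq, hqx, rfl⟩
    exact (hmin x ⟨hx, hsum⟩).trans ((hdual x).2 ⟨p, q, y, z, hy, hz, hp, hpx, hq, hqx, rfl⟩)
  · obtain ⟨p, q, y, z, hy, hz, hp, hpx, hq, hqx, hD⟩ := (hdual x).1
    exact ⟨p, q, y, z, hy, hz, hp, hpx, hq, hqx, hD.symm.trans hfx⟩
  · rintro ⟨p, q, y, z, hy, hz, hp, hpx, hq, hqx, hD⟩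
    exact le_antisymm (hD ▸ (hdual x).2 ⟨p, q, y, z, hy, hz, hp, hpx, hq, hqx, rfl⟩)
      (hmin x ⟨hx, hsum⟩)

/-- Theorem 1 (equivalence of the robust and dualized optimization problems).
Here `gμ x` and `gσ x` denote the worst-case deviation terms, i.e. the maxima
`max_{|Sμ| ≤ Γμ} ∑_{i ∈ Sμ} δμ i * x i` and
`max_{|Sσ| ≤ Γσ} ∑_{(i,j) ∈ Sσ} δσ (i,j) * x i * x j`, characterized by
`IsGreatest`.  The minimum over binary `x` with `∑ x i = N` of the worst-case
objective equals the minimum of the dualized objective over `(x, p, q, y, z)`,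
and a feasible `x` attains the first minimum iff some `(x, p, q, y, z)` attains
the second. -/
theorem robust_portfolio_dualization_equiv
    {I : Type*} [Fintype I] (α : ℝ) (hα0 : 0 ≤ α) (hα1 : α ≤ 1)
    (μhat : I → ℝ) (σhat : I × I → ℝ)
    (δμ : I → ℝ) (δσ : I × I → ℝ)
    (hδμ : ∀ i, 0 ≤ δμ i) (hδσ : ∀ ij, 0 ≤ δσ ij)
    (Γμ Γσ N : ℕ) (hN : N ≤ Fintype.card I)
    (gμ gσ : (I → ℝ) → ℝ)
    (hgμ : ∀ x : I → ℝ,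
      IsGreatest {w : ℝ | ∃ S : Finset I, S.card ≤ Γμ ∧ w = ∑ i ∈ S, δμ i * x i} (gμ x))
    (hgσ : ∀ x : I → ℝ,
      IsGreatest {w : ℝ | ∃ S : Finset (I × I), S.card ≤ Γσ ∧
          w = ∑ ij ∈ S, δσ ij * x ij.1 * x ij.2} (gσ x)) :
    ∃ v : ℝ,
      IsLeast {v : ℝ | ∃ x : I → ℝ, (∀ i, x i = 0 ∨ x i = 1) ∧ (∑ i, x i) = (N : ℝ) ∧
          v = α * ((∑ ij : I × I, σhat ij * x ij.1 * x ij.2) + gσ x)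
              - (1 - α) * ((∑ i, μhat i * x i) - gμ x)} v ∧
      IsLeast {v : ℝ | ∃ (x : I → ℝ) (p : I → ℝ) (q : I × I → ℝ) (y z : ℝ),
          (∀ i, x i = 0 ∨ x i = 1) ∧ (∑ i, x i) = (N : ℝ) ∧
          0 ≤ y ∧ 0 ≤ z ∧
          (∀ i, 0 ≤ p i) ∧ (∀ i, δμ i * x i ≤ y + p i) ∧
          (∀ ij, 0 ≤ q ij) ∧ (∀ ij : I × I, δσ ij * x ij.1 * x ij.2 ≤ z + q ij) ∧
          v = α * ((∑ ij : I × I, σhat ij * x ij.1 * x ij.2) + z * (Γσ : ℝ)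
                    + ∑ ij : I × I, q ij)
              - (1 - α) * ((∑ i, μhat i * x i) - y * (Γμ : ℝ) - ∑ i, p i)} v ∧
      (∀ x : I → ℝ, (∀ i, x i = 0 ∨ x i = 1) → (∑ i, x i) = (N : ℝ) →
        ((α * ((∑ ij : I × I, σhat ij * x ij.1 * x ij.2) + gσ x)
            - (1 - α) * ((∑ i, μhat i * x i) - gμ x) = v) ↔
          (∃ (p : I → ℝ) (q : I × I → ℝ) (y z : ℝ),
            0 ≤ y ∧ 0 ≤ z ∧
            (∀ i, 0 ≤ p i) ∧ (∀ i, δμ i * x i ≤ y + p i) ∧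
            (∀ ij, 0 ≤ q ij) ∧ (∀ ij : I × I, δσ ij * x ij.1 * x ij.2 ≤ z + q ij) ∧
            α * ((∑ ij : I × I, σhat ij * x ij.1 * x ij.2) + z * (Γσ : ℝ)
                  + ∑ ij : I × I, q ij)
              - (1 - α) * ((∑ i, μhat i * x i) - y * (Γμ : ℝ) - ∑ i, p i) = v))) :=
  robust_portfolio_dualization_equiv_general α hα0 hα1 μhat σhat δμ δσ Γμ Γσ N hN gμ gσ hgμ hgσ
end
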